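/- Black-Scholes gamma formula and bound: for all S, K, θ, σ > 0, the second derivatives of c_BS and of p_BS with respect to S both equal φ(d₁)/(S·σ·√θ), and in particular each is bounded above by 1/(S·√(2π·σ²·θ)). -/

import Mathlib

open MeasureTheory Real Filter

/-- The standard normal density. -/
noncomputable def stdNormalPDF (x : ℝ) : ℝ :=
  (Real.sqrt (2 * Real.pi))⁻¹ * Real.exp (-(x ^ 2) / 2)

/-- The standard normal cumulative distribution function. -/
noncomputable def stdNormalCDF (x : ℝ) : ℝ :=
  ∫ t in Set.Iic x, stdNormalPDF t

/-- `d₁ = log(S/K)/(σ√θ) + σ√θ/2`. -/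
noncomputable def d1 (S K θ σ : ℝ) : ℝ :=
  Real.log (S / K) / (σ * Real.sqrt θ) + σ * Real.sqrt θ / 2

/-- `d₂ = d₁ − σ√θ`. -/
noncomputable def d2 (S K θ σ : ℝ) : ℝ :=
  d1 S K θ σ - σ * Real.sqrt θ

/-- Black-Scholes call price `c_BS(S,K,θ,σ) = S·Φ(d₁) − K·Φ(d₂)`. -/
noncomputable def cBS (S K θ σ : ℝ) : ℝ :=
  S * stdNormalCDF (d1 S K θ σ) - K * stdNormalCDF (d2 S K θ σ)

/-- Black-Scholes put price `p_BS(S,K,θ,σ) = K·Φ(−d₂) − S·Φ(−d₁)`. -/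
noncomputable def pBS (S K θ σ : ℝ) : ℝ :=
  K * stdNormalCDF (-(d2 S K θ σ)) - S * stdNormalCDF (-(d1 S K θ σ))

/-!
The delta `∂c_BS/∂S` equals `Φ(d₁)`: differentiating `S·Φ(d₁) − K·Φ(d₂)` produces the extra
terms `(S·φ(d₁) − K·φ(d₂))·∂d₁/∂S`, which vanish because `d₁² − d₂² = 2 log(S/K)`. Put-call
parity `p_BS = c_BS − S + K` (from `Φ(−x) = 1 − Φ(x)`) shows that the put has delta
`Φ(d₁) − 1`. Differentiating once more gives `φ(d₁)·∂d₁/∂S = φ(d₁)/(S·σ·√θ)` for both, and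
the bound is `φ ≤ 1/√(2π)`.
-/

open Topology ProbabilityTheory

lemma stdNormalPDF_eq_gaussianPDFReal : stdNormalPDF = gaussianPDFReal 0 1 := by
  ext x
  simp [stdNormalPDF, gaussianPDFReal]

lemma integrable_stdNormalPDF : Integrable stdNormalPDF :=
  stdNormalPDF_eq_gaussianPDFReal ▸ integrable_gaussianPDFReal 0 1

lemma integral_stdNormalPDF : ∫ x, stdNormalPDF x = 1 :=
  stdNormalPDF_eq_gaussianPDFReal ▸ integral_gaussianPDFReal_eq_one 0 one_ne_zero

lemma continuous_stdNormalPDF : Continuous stdNormalPDF := by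
  unfold stdNormalPDF
  fun_prop

lemma stdNormalPDF_neg (x : ℝ) : stdNormalPDF (-x) = stdNormalPDF x := by
  simp [stdNormalPDF]

lemma stdNormalPDF_le (x : ℝ) : stdNormalPDF x ≤ (√(2 * π))⁻¹ := by
  have : exp (-(x ^ 2) / 2) ≤ 1 := exp_le_one_iff.mpr (by nlinarith [sq_nonneg x])
  simpa [stdNormalPDF] using mul_le_of_le_one_right (by positivity) this

lemma stdNormalCDF_neg (x : ℝ) : stdNormalCDF (-x) = 1 - stdNormalCDF x := by
  have hsplit := intervalIntegral.integral_Iic_add_Ioi (b := x)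
    integrable_stdNormalPDF.integrableOn integrable_stdNormalPDF.integrableOn
  have hreflect : stdNormalCDF (-x) = ∫ t in Set.Ioi x, stdNormalPDF t := by
    simp_rw [stdNormalCDF, ← integral_comp_neg_Ioi, stdNormalPDF_neg]
  rw [hreflect, ← integral_stdNormalPDF, ← hsplit, stdNormalCDF]
  ring

lemma hasDerivAt_stdNormalCDF (x : ℝ) : HasDerivAt stdNormalCDF (stdNormalPDF x) x := by
  have hCDF : stdNormalCDF = fun u ↦
      stdNormalCDF 0 + ∫ t in (0 : ℝ)..u, stdNormalPDF t := by
    ext u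
    rw [← intervalIntegral.integral_Iic_sub_Iic integrable_stdNormalPDF.integrableOn
      integrable_stdNormalPDF.integrableOn, stdNormalCDF, stdNormalCDF]
    ring
  rw [hCDF]
  exact (intervalIntegral.integral_hasDerivAt_right
    integrable_stdNormalPDF.intervalIntegrable
    (continuous_stdNormalPDF.stronglyMeasurableAtFilter _ _)
    continuous_stdNormalPDF.continuousAt).const_add _

section BlackScholes

variable {S K θ σ : ℝ}

lemma hasDerivAt_d1 (hS : S ≠ 0) (hK : K ≠ 0) :
    HasDerivAt (fun s ↦ d1 s K θ σ) (S * σ * √θ)⁻¹ S := by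
  have hlog : HasDerivAt (fun s ↦ log (s / K)) (1 / K / (S / K)) S :=
    ((hasDerivAt_id S).div_const K).log (div_ne_zero hS hK)
  refine ((hlog.div_const (σ * √θ)).add_const (σ * √θ / 2)).congr_deriv ?_
  rw [div_div_div_cancel_right₀ hK, div_div, one_div, mul_assoc]

lemma hasDerivAt_d2 (hS : S ≠ 0) (hK : K ≠ 0) :
    HasDerivAt (fun s ↦ d2 s K θ σ) (S * σ * √θ)⁻¹ S :=
  (hasDerivAt_d1 hS hK).sub_const _

lemma mul_stdNormalPDF_d1_eq_mul_stdNormalPDF_d2 (hS : 0 < S) (hK : 0 < K) (hσθ : σ * √θ ≠ 0) :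
    S * stdNormalPDF (d1 S K θ σ) = K * stdNormalPDF (d2 S K θ σ) := by
  have hsq : d1 S K θ σ ^ 2 - d2 S K θ σ ^ 2 = 2 * log (S / K) := by
    simp only [d2, d1]
    generalize σ * √θ = a at *
    field_simp
    ring
  have hexp : exp (-(d2 S K θ σ ^ 2) / 2) = exp (-(d1 S K θ σ ^ 2) / 2) * (S / K) := by
    rw [← exp_log (div_pos hS hK), ← exp_add]
    congr 1
    linarith
  rw [stdNormalPDF, stdNormalPDF, hexp]
  field_simp

lemma hasDerivAt_cBS (hS : 0 < S) (hK : 0 < K) (hσθ : σ * √θ ≠ 0) :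
    HasDerivAt (fun s ↦ cBS s K θ σ) (stdNormalCDF (d1 S K θ σ)) S := by
  have hΦd1 := (hasDerivAt_stdNormalCDF _).comp S (hasDerivAt_d1 (θ := θ) (σ := σ) hS.ne' hK.ne')
  have hΦd2 := (hasDerivAt_stdNormalCDF _).comp S (hasDerivAt_d2 (θ := θ) (σ := σ) hS.ne' hK.ne')
  refine (((hasDerivAt_id S).mul hΦd1).sub (hΦd2.const_mul K)).congr_deriv ?_
  have hkey := mul_stdNormalPDF_d1_eq_mul_stdNormalPDF_d2 hS hK hσθ
  simp only [id, Function.comp_apply, one_mul, ← mul_assoc, hkey]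
  ring

lemma pBS_eq_cBS_sub_add : pBS S K θ σ = cBS S K θ σ - S + K := by
  simp only [pBS, cBS, stdNormalCDF_neg]
  ring

lemma hasDerivAt_pBS (hS : 0 < S) (hK : 0 < K) (hσθ : σ * √θ ≠ 0) :
    HasDerivAt (fun s ↦ pBS s K θ σ) (stdNormalCDF (d1 S K θ σ) - 1) S := by
  simp only [pBS_eq_cBS_sub_add]
  exact ((hasDerivAt_cBS hS hK hσθ).sub (hasDerivAt_id S)).add_const K

end BlackScholes

lemma stdNormalPDF_div_le (x : ℝ) {c : ℝ} (hc : 0 < c) :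
    stdNormalPDF x / c ≤ 1 / (√(2 * π) * c) := by
  rw [one_div, mul_inv, ← div_eq_mul_inv]
  exact div_le_div_of_nonneg_right (stdNormalPDF_le x) hc.le

/-- Black-Scholes gamma formula and bound: for all `S, K, θ, σ > 0`, the second
derivatives of `c_BS` and `p_BS` with respect to `S` both equal `φ(d₁)/(S·σ·√θ)`, and
each is bounded above by `1/(S·√(2π·σ²·θ))`. -/
theorem blackScholes_gamma
    (S K θ σ : ℝ) (hS : 0 < S) (hK : 0 < K) (hθ : 0 < θ) (hσ : 0 < σ) :
    deriv (fun s => deriv (fun s' => cBS s' K θ σ) s) S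
        = stdNormalPDF (d1 S K θ σ) / (S * σ * Real.sqrt θ)
      ∧ deriv (fun s => deriv (fun s' => pBS s' K θ σ) s) S
        = stdNormalPDF (d1 S K θ σ) / (S * σ * Real.sqrt θ)
      ∧ stdNormalPDF (d1 S K θ σ) / (S * σ * Real.sqrt θ)
        ≤ 1 / (S * Real.sqrt (2 * Real.pi * σ ^ 2 * θ)) := by
  have hσθ : σ * √θ ≠ 0 := by positivity
  have hgamma : HasDerivAt (fun s ↦ stdNormalCDF (d1 s K θ σ))
      (stdNormalPDF (d1 S K θ σ) / (S * σ * √θ)) S :=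
    (hasDerivAt_stdNormalCDF _).comp S (hasDerivAt_d1 hS.ne' hK.ne')
  have hcall : (fun s ↦ deriv (fun s' ↦ cBS s' K θ σ) s)
      =ᶠ[𝓝 S] fun s ↦ stdNormalCDF (d1 s K θ σ) := by
    filter_upwards [eventually_gt_nhds hS] with s hs
    exact (hasDerivAt_cBS hs hK hσθ).deriv
  have hput : (fun s ↦ deriv (fun s' ↦ pBS s' K θ σ) s)
      =ᶠ[𝓝 S] fun s ↦ stdNormalCDF (d1 s K θ σ) - 1 := by
    filter_upwards [eventually_gt_nhds hS] with s hs
    exact (hasDerivAt_pBS hs hK hσθ).deriv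
  have hsqrt : S * √(2 * π * σ ^ 2 * θ) = √(2 * π) * (S * σ * √θ) := by
    rw [mul_assoc (2 * π), sqrt_mul (by positivity : (0 : ℝ) ≤ 2 * π), sqrt_mul (sq_nonneg σ),
      sqrt_sq hσ.le]
    ring
  refine ⟨?_, ?_, ?_⟩
  · rw [hcall.deriv_eq, hgamma.deriv]
  · rw [hput.deriv_eq, (hgamma.sub_const 1).deriv]
  · rw [hsqrt]
    exact stdNormalPDF_div_le _ (by positivity)
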